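/- Let X = ⊔G_n be a space of graphs and (π_n : G̃_n → G_n) an asymptotically faithful covering sequence such that the family {G̃_n} has the uniform operator norm localization property with constant c ∈ (0,1]. Then for every locally compact bounded operator T on ℓ²(X,H₀) of propagation at most R, there exists N such that for all n ≥ N the lift T̃⁽ⁿ⁾ at scale R of T⁽ⁿ⁾ defines a bounded operator on ℓ²(G̃_n,H₀) with ‖T̃⁽ⁿ⁾‖ ≤ (1/c)·‖T‖. -/

import Mathlib

noncomputable section

open scoped ENNReal

/-- ℓ²(Y, H): the Hilbert space of square-summable `H`-valued families indexed by `Y`. -/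
abbrev L2 (Y : Type*) (H : Type*) [NormedAddCommGroup H] [InnerProductSpace ℂ H] : Type _ :=
  lp (fun _ : Y => H) 2

namespace Roe

variable {Y H : Type*} [NormedAddCommGroup H] [InnerProductSpace ℂ H]

set_option maxHeartbeats 1000000 in
/-- The matrix entry `T_{x,y}` of a bounded operator `T` on `ℓ²(Y,H)`: the continuous linear
map on `H` determined by `T_{x,y} v = (T (δ_y ⊗ v)) x`. -/
def entry (T : L2 Y H →L[ℂ] L2 Y H) (x y : Y) : H →L[ℂ] H :=
  letI := Classical.decEq Y
  LinearMap.mkContinuous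
    { toFun := fun v => T (lp.single 2 y v) x
      map_add' := by
        intro v w
        show (T (lp.single 2 y (v + w))) x = (T (lp.single 2 y v)) x + (T (lp.single 2 y w)) x
        have h : lp.single (E := fun _ : Y => H) 2 y (v + w)
            = lp.single 2 y v + lp.single 2 y w := by
          apply lp.ext
          funext j
          by_cases hj : j = y
          · subst hj
            simp only [lp.single_apply_self, lp.coeFn_add, Pi.add_apply]
          · simp only [lp.single_apply_ne _ _ _ hj, lp.coeFn_add, Pi.add_apply, add_zero]
        rw [h, map_add]
        simp only [lp.coeFn_add, Pi.add_apply]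
      map_smul' := by
        intro c v
        show (T (lp.single 2 y (c • v))) x = c • (T (lp.single 2 y v)) x
        rw [lp.single_smul, map_smul]
        simp only [lp.coeFn_smul, Pi.smul_apply] }
    ‖T‖
    (by
      intro v
      show ‖(T (lp.single 2 y v)) x‖ ≤ ‖T‖ * ‖v‖
      have h1 : ‖(T (lp.single 2 y v)) x‖ ≤ ‖T (lp.single 2 y v)‖ :=
        lp.norm_apply_le_norm (by norm_num) _ _
      have h2 : ‖T (lp.single 2 y v)‖ ≤ ‖T‖ * ‖lp.single (E := fun _ : Y => H) 2 y v‖ :=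
        T.le_opNorm _
      have h3 : ‖lp.single (E := fun _ : Y => H) 2 y v‖ = ‖v‖ := by
        simpa using lp.norm_single (E := fun _ : Y => H) (p := 2) (by norm_num) (fun _ => v) y
      calc ‖(T (lp.single 2 y v)) x‖ ≤ ‖T‖ * ‖lp.single (E := fun _ : Y => H) 2 y v‖ :=
            le_trans h1 h2
        _ = ‖T‖ * ‖v‖ := by rw [h3])

/-- `T` has propagation at most `R` with respect to the distance function `d`. -/
def PropagationLE (d : Y → Y → ℝ) (T : L2 Y H →L[ℂ] L2 Y H) (R : ℝ) : Prop :=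
  ∀ x y : Y, R < d x y → entry T x y = 0

/-- A set is bounded with respect to the distance function `d`. -/
def DBounded (d : Y → Y → ℝ) (B : Set Y) : Prop :=
  ∃ C : ℝ, ∀ x ∈ B, ∀ y ∈ B, d x y ≤ C

/-- `T` is locally compact with respect to the distance function `d`: all matrix entries are
compact operators, and over every bounded set only finitely many matrix entries are nonzero. -/
def LocallyCompact (d : Y → Y → ℝ) (T : L2 Y H →L[ℂ] L2 Y H) : Prop :=
  (∀ x y : Y, IsCompactOperator (entry T x y)) ∧
    ∀ B : Set Y, DBounded d B →
      {p : Y × Y | p.1 ∈ B ∧ p.2 ∈ B ∧ entry T p.1 p.2 ≠ 0}.Finite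

/-- Membership in the algebraic Roe algebra `ℂ[Y]`: locally compact and finite propagation. -/
def MemRoeAlgebraic (d : Y → Y → ℝ) (T : L2 Y H →L[ℂ] L2 Y H) : Prop :=
  LocallyCompact d T ∧ ∃ R : ℝ, PropagationLE d T R

/-- The Roe algebra `C*(Y)`: the operator-norm closure of `ℂ[Y]` in `B(ℓ²(Y,H))`. -/
def RoeAlgebra (d : Y → Y → ℝ) : Set (L2 Y H →L[ℂ] L2 Y H) :=
  closure {T | MemRoeAlgebraic d T}

/-- `T` is a ghost operator with respect to the distance function `d`. -/
def IsGhost (d : Y → Y → ℝ) (T : L2 Y H →L[ℂ] L2 Y H) : Prop :=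
  ∀ R : ℝ, 0 < R → ∀ ε : ℝ, 0 < ε → ∃ B : Set Y, DBounded d B ∧
    ∀ ξ : L2 Y H, ‖ξ‖ = 1 →
      (∃ x : Y, x ∉ B ∧ ∀ z : Y, ξ z ≠ 0 → d x z < R) → ‖T ξ‖ < ε

/-- The support of `ξ ∈ ℓ²(Y,H)` has diameter at most `S` for the distance function `d`. -/
def SupportDiamLE (d : Y → Y → ℝ) (ξ : L2 Y H) (S : ℝ) : Prop :=
  ∀ z w : Y, ξ z ≠ 0 → ξ w ≠ 0 → d z w ≤ S

end Roe

/-- `π : X' → X` is a `K`-metric cover: it is surjective, and for every `u` the restriction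
of `π` to the open ball of radius `K` about `u` is a distance-preserving bijection onto the
open ball of radius `K` about `π u`. -/
def IsMetricCover {X' X : Type*} (d' : X' → X' → ℝ) (d : X → X → ℝ)
    (π : X' → X) (K : ℝ) : Prop :=
  Function.Surjective π ∧
    ∀ u : X', Set.BijOn π {w | d' u w < K} {x | d (π u) x < K} ∧
      ∀ w w' : X', d' u w < K → d' u w' < K → d (π w) (π w') = d' w w'

/-- `T'` is the lift of `T` at scale `R` along `π`: its matrix entries are
`T'_{u,v} = T_{π u, π v}` when `d'(u,v) ≤ R` and `0` otherwise. -/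
def IsLift {X' X H : Type*} [NormedAddCommGroup H] [InnerProductSpace ℂ H]
    (π : X' → X) (d' : X' → X' → ℝ)
    (T : L2 X H →L[ℂ] L2 X H) (R : ℝ) (T' : L2 X' H →L[ℂ] L2 X' H) : Prop :=
  ∀ u v : X', (d' u v ≤ R → Roe.entry T' u v = Roe.entry T (π u) (π v)) ∧
    (R < d' u v → Roe.entry T' u v = 0)

/-- `T'` is the lift at scale `S` along `π` of the `n`-th diagonal block `T⁽ⁿ⁾ = PₙTPₙ` of a
bounded operator `T` on `ℓ²(⊔ₙ Vₙ, H)`. -/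
def IsBlockLift {V : ℕ → Type*} {W H : Type*} [NormedAddCommGroup H] [InnerProductSpace ℂ H]
    {n : ℕ} (π : W → V n) (d' : W → W → ℝ)
    (T : L2 (Σ k, V k) H →L[ℂ] L2 (Σ k, V k) H) (S : ℝ)
    (T' : L2 W H →L[ℂ] L2 W H) : Prop :=
  ∀ u v : W, (d' u v ≤ S → Roe.entry T' u v = Roe.entry T ⟨n, π u⟩ ⟨n, π v⟩) ∧
    (S < d' u v → Roe.entry T' u v = 0)

/-- The graph metric of a simple graph, as a real-valued distance function
(shortest path length). -/
def gdist {V : Type*} (G : SimpleGraph V) (u v : V) : ℝ := G.dist u v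


/-!
Lift `T⁽ⁿ⁾` fibrewise: over a pair of fibres `(x, y)` of `πₙ` the lift moves a vector along a
partial injection of `G̃ₙ` and applies `T_{x,y}`. As `Gₙ` is finite this is a finite sum of bounded
operators, and it has the prescribed matrix entries; it is locally compact of propagation `R`, so
operator norm localization yields a unit vector `ξ` supported in an `S`-ball with
`c ‖T̃‖ ≤ ‖T̃ ξ‖`. Once `πₙ` is injective and isometric on balls of radius `S + |R| + 1`, pushing
`ξ` down to `η` on `Gₙ` identifies `T̃ ξ` with `T η` near the support of `ξ`, whence
`c ‖T̃‖ ≤ ‖T η‖ ≤ ‖T‖`.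
-/

open Function Set

namespace lp

variable {α β E F : Type*} [NormedAddCommGroup E] [NormedAddCommGroup F] {p : ℝ≥0∞}

theorem sum_rpow_le_of_injOn (hp : 0 < p.toReal) {f : α → E} (g : lp (fun _ : β => F) p)
    {e : α → β} (he : InjOn e (support f)) {D : ℝ} (hD : 0 ≤ D)
    (hfg : ∀ a, ‖f a‖ ≤ D * ‖g (e a)‖) (s : Finset α) :
    ∑ a ∈ s, ‖f a‖ ^ p.toReal ≤ (D * ‖g‖) ^ p.toReal := by
  classical
  set t := s.filter (fun a => f a ≠ 0)
  have het : InjOn e t := he.mono fun a ha => (Finset.mem_filter.mp ha).2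
  calc ∑ a ∈ s, ‖f a‖ ^ p.toReal = ∑ a ∈ t, ‖f a‖ ^ p.toReal := by
        refine (Finset.sum_filter_of_ne fun a _ h => ?_).symm
        contrapose! h
        simp [h, Real.zero_rpow hp.ne']
    _ ≤ ∑ a ∈ t, D ^ p.toReal * ‖g (e a)‖ ^ p.toReal := by
        gcongr with a
        rw [← Real.mul_rpow hD (norm_nonneg _)]
        exact Real.rpow_le_rpow (norm_nonneg _) (hfg a) hp.le
    _ = D ^ p.toReal * ∑ b ∈ t.image e, ‖g b‖ ^ p.toReal := by
        rw [← Finset.mul_sum, Finset.sum_image het]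
    _ ≤ D ^ p.toReal * ‖g‖ ^ p.toReal := by gcongr; exact sum_rpow_le_norm_rpow hp g _
    _ = (D * ‖g‖) ^ p.toReal := (Real.mul_rpow hD (norm_nonneg' g)).symm

theorem memℓp_of_injOn (hp : 0 < p.toReal) {f : α → E} (g : lp (fun _ : β => F) p)
    {e : α → β} (he : InjOn e (support f)) {D : ℝ} (hD : 0 ≤ D)
    (hfg : ∀ a, ‖f a‖ ≤ D * ‖g (e a)‖) : Memℓp f p :=
  memℓp_gen' (sum_rpow_le_of_injOn hp g he hD hfg)

theorem norm_le_of_injOn (hp : 0 < p.toReal) (f : lp (fun _ : α => E) p)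
    (g : lp (fun _ : β => F) p) {e : α → β} (he : InjOn e (support f)) {D : ℝ} (hD : 0 ≤ D)
    (hfg : ∀ a, ‖f a‖ ≤ D * ‖g (e a)‖) : ‖f‖ ≤ D * ‖g‖ :=
  norm_le_of_forall_sum_le hp (mul_nonneg hD (norm_nonneg' g)) (sum_rpow_le_of_injOn hp g he hD hfg)

theorem exists_pushforward_of_injOn [Nonempty α] (hp : 0 < p.toReal) {π : α → β} {U : Set α}
    (hinj : InjOn π U) (ξ : lp (fun _ : α => E) p) :
    ∃ η : lp (fun _ : β => E) p, ‖η‖ ≤ ‖ξ‖ ∧ (∀ w ∈ U, η (π w) = ξ w) ∧ ∀ x ∉ π '' U, η x = 0 := by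
  let f := (π '' U).indicator fun x => ξ (invFunOn π U x)
  have hf : InjOn (invFunOn π U) (support f) :=
    (invFunOn_injOn_image π U).mono support_indicator_subset
  have hfξ : ∀ x, ‖f x‖ ≤ 1 * ‖ξ (invFunOn π U x)‖ := fun x => by
    simpa using norm_indicator_le_norm_self _ x
  let η : lp (fun _ : β => E) p := ⟨f, memℓp_of_injOn hp ξ hf zero_le_one hfξ⟩
  refine ⟨η, ?_, fun w hw => ?_, fun x hx => indicator_of_notMem hx (fun x => ξ (invFunOn π U x))⟩
  · simpa using norm_le_of_injOn hp η ξ hf zero_le_one hfξ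
  · exact (indicator_of_mem (mem_image_of_mem π hw) fun x => ξ (invFunOn π U x)).trans
      (congrArg ξ (hinj.leftInvOn_invFunOn hw))

variable {𝕜 : Type*} [NontriviallyNormedField 𝕜] [NormedSpace 𝕜 E] [NormedSpace 𝕜 F]
  [Fact (1 ≤ p)]

def indicatorCompCLM (hp : 0 < p.toReal) (σ : α → β) (D : Set α) (hσ : InjOn σ D)
    (A : E →L[𝕜] F) : lp (fun _ : β => E) p →L[𝕜] lp (fun _ : α => F) p :=
  LinearMap.mkContinuous
    { toFun := fun ξ => ⟨D.indicator fun u => A (ξ (σ u)),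
        memℓp_of_injOn hp ξ (hσ.mono support_indicator_subset) (norm_nonneg A)
          fun _ => (norm_indicator_le_norm_self _ _).trans (A.le_opNorm _)⟩
      map_add' := fun ξ ζ => by
        ext u
        show D.indicator (fun u => A ((ξ + ζ : lp (fun _ : β => E) p) (σ u))) u =
          D.indicator (fun u => A (ξ (σ u))) u + D.indicator (fun u => A (ζ (σ u))) u
        by_cases hu : u ∈ D <;> simp [hu]
      map_smul' := fun r ξ => by
        ext u
        show D.indicator (fun u => A ((r • ξ : lp (fun _ : β => E) p) (σ u))) u =
          r • D.indicator (fun u => A (ξ (σ u))) u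
        by_cases hu : u ∈ D <;> simp [hu] }
    ‖A‖ fun ξ => norm_le_of_injOn hp _ ξ (hσ.mono support_indicator_subset) (norm_nonneg A)
      fun u => (norm_indicator_le_norm_self (fun u => A (ξ (σ u))) u).trans (A.le_opNorm _)

theorem indicatorCompCLM_apply (hp : 0 < p.toReal) (σ : α → β) (D : Set α) (hσ : InjOn σ D)
    (A : E →L[𝕜] F) (ξ : lp (fun _ : β => E) p) (u : α) :
    indicatorCompCLM hp σ D hσ A ξ u = D.indicator (fun u => A (ξ (σ u))) u :=
  rfl

end lp

namespace Roe

variable {Y H : Type*} [NormedAddCommGroup H] [InnerProductSpace ℂ H]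

theorem entry_apply [DecidableEq Y] (T : L2 Y H →L[ℂ] L2 Y H) (x y : Y) (v : H) :
    entry T x y v = T (lp.single 2 y v) x := by
  obtain rfl : ‹DecidableEq Y› = Classical.decEq Y := Subsingleton.elim _ _
  rfl

theorem apply_eq_sum_entry (T : L2 Y H →L[ℂ] L2 Y H) {ξ : L2 Y H} (F : Finset Y)
    (hξ : ∀ v ∉ F, ξ v = 0) (u : Y) : T ξ u = ∑ v ∈ F, entry T u v (ξ v) := by
  classical
  have hsum : ξ = ∑ v ∈ F, lp.single 2 v (ξ v) := by
    ext w
    simp only [lp.coeFn_sum, Finset.sum_apply, lp.coeFn_single, Finset.sum_pi_single]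
    split_ifs with hw
    · rfl
    · exact hξ w hw
  conv_lhs => rw [hsum]
  simp only [map_sum, lp.coeFn_sum, Finset.sum_apply, entry_apply]

theorem PropagationLE.mono {d : Y → Y → ℝ} {T : L2 Y H →L[ℂ] L2 Y H} {R R' : ℝ}
    (h : PropagationLE d T R) (hRR' : R ≤ R') : PropagationLE d T R' :=
  fun x y hxy => h x y (hRR'.trans_lt hxy)

end Roe

namespace SimpleGraph

variable {V : Type*} {G : SimpleGraph V}

theorem Connected.finite_setOf_dist_le (hG : G.Connected)
    (hloc : ∀ v, (G.neighborSet v).Finite) (u : V) (m : ℕ) :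
    {v | G.dist u v ≤ m}.Finite := by
  induction m with
  | zero =>
    refine (finite_singleton u).subset fun v hv => ?_
    exact (hG.dist_eq_zero_iff.mp (Nat.le_zero.mp hv)).symm
  | succ m ih =>
    refine (ih.union (ih.biUnion fun w _ => hloc w)).subset fun v hv => ?_
    obtain ⟨q, hq⟩ := hG.exists_walk_length_eq_dist v u
    cases q with
    | nil => exact Or.inl (by simp)
    | @cons _ z _ hadj q =>
      refine Or.inr (mem_biUnion (x := z) ?_ hadj.symm)
      have hqz : G.dist z u ≤ q.length := dist_le q
      simp only [Walk.length_cons] at hq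
      simp only [mem_ofPred_eq] at hv ⊢
      rw [dist_comm] at hv hqz
      omega

end SimpleGraph

theorem gdist_comm {V : Type*} (G : SimpleGraph V) (u v : V) : gdist G u v = gdist G v u := by
  simp only [gdist, SimpleGraph.dist_comm]

theorem SimpleGraph.Connected.gdist_triangle {V : Type*} {G : SimpleGraph V} (hG : G.Connected)
    (u v w : V) : gdist G u w ≤ gdist G u v + gdist G v w := by
  unfold gdist
  exact_mod_cast hG.dist_triangle

namespace IsMetricCover

variable {X' X : Type*} {d' : X' → X' → ℝ} {d : X → X → ℝ} {π : X' → X} {K : ℝ}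

theorem injOn_ball (h : IsMetricCover d' d π K) (u : X') : InjOn π {w | d' u w < K} :=
  (h.2 u).1.injOn

theorem injOn_of_le {R : ℝ} (h : IsMetricCover d' d π K) (hRK : R < K) (u : X') :
    InjOn π {w | d' u w ≤ R} :=
  (h.injOn_ball u).mono fun _ hw => lt_of_le_of_lt hw hRK

theorem finite_ball [Finite X] (h : IsMetricCover d' d π K) (u : X') :
    {w | d' u w < K}.Finite :=
  Finite.of_finite_image (toFinite _) (h.injOn_ball u)

theorem finite_of_dBounded [Finite X] {G' : SimpleGraph X'}
    (h : IsMetricCover (gdist G') d π K) (hK : 1 < K) (hG' : G'.Connected) {B : Set X'}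
    (hB : Roe.DBounded (gdist G') B) : B.Finite := by
  obtain ⟨C, hC⟩ := hB
  rcases B.eq_empty_or_nonempty with rfl | ⟨b, hb⟩
  · exact finite_empty
  have hloc : ∀ w, (G'.neighborSet w).Finite := fun w =>
    (h.finite_ball w).subset fun w' hw' => by
      simpa [gdist, SimpleGraph.dist_eq_one_iff_adj.mpr hw'] using hK
  refine (hG'.finite_setOf_dist_le hloc b ⌈C⌉₊).subset fun w hw => ?_
  have hbw : gdist G' b w ≤ ⌈C⌉₊ := (hC b hb w hw).trans (Nat.le_ceil C)
  exact (Nat.cast_le (α := ℝ)).mp hbw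

end IsMetricCover

section LiftOp

variable {W V H : Type*} [NormedAddCommGroup H] [InnerProductSpace ℂ H]
  (π : W → V) (d : W → W → ℝ) (R : ℝ)

def liftDomain (x y : V) : Set W := {u | π u = x ∧ ∃ v, π v = y ∧ d u v ≤ R}

open Classical in
def liftStep (y : V) (u : W) : W := if h : ∃ v, π v = y ∧ d u v ≤ R then h.choose else u

variable {π d R}

theorem liftStep_spec {x y : V} {u : W} (hu : u ∈ liftDomain π d R x y) :
    π (liftStep π d R y u) = y ∧ d u (liftStep π d R y u) ≤ R := by
  rw [liftStep, dif_pos hu.2]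
  exact hu.2.choose_spec

theorem liftStep_eq (hinj : ∀ u, InjOn π {v | d u v ≤ R}) {u v : W} (huv : d u v ≤ R) :
    liftStep π d R (π v) u = v :=
  have hu : u ∈ liftDomain π d R (π u) (π v) := ⟨rfl, v, rfl, huv⟩
  hinj u (liftStep_spec hu).2 huv (liftStep_spec hu).1

theorem injOn_liftStep (hinj' : ∀ v, InjOn π {u | d u v ≤ R}) (x y : V) :
    InjOn (liftStep π d R y) (liftDomain π d R x y) := fun _ hu _ hu' huu' =>
  hinj' _ (liftStep_spec hu).2 (huu' ▸ (liftStep_spec hu').2) (hu.1.trans hu'.1.symm)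

variable [Fintype V]

def liftOp (a : V → V → H →L[ℂ] H) (hinj' : ∀ v, InjOn π {u | d u v ≤ R}) :
    L2 W H →L[ℂ] L2 W H :=
  ∑ x, ∑ y, lp.indicatorCompCLM (by norm_num) (liftStep π d R y) (liftDomain π d R x y)
    (injOn_liftStep hinj' x y) (a x y)

theorem entry_liftOp (a : V → V → H →L[ℂ] H) (hinj : ∀ u, InjOn π {v | d u v ≤ R})
    (hinj' : ∀ v, InjOn π {u | d u v ≤ R}) (u v : W) (w : H) :
    Roe.entry (liftOp a hinj') u v w = if d u v ≤ R then a (π u) (π v) w else 0 := by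
  classical
  have hpiece : ∀ x y, (liftDomain π d R x y).indicator
      (fun u' => a x y (lp.single (E := fun _ : W => H) 2 v w (liftStep π d R y u'))) u =
      if π u = x ∧ π v = y ∧ d u v ≤ R then a x y w else 0 := by
    intro x y
    by_cases hcond : π u = x ∧ π v = y ∧ d u v ≤ R
    · obtain ⟨rfl, rfl, huv⟩ := hcond
      have hu : u ∈ liftDomain π d R (π u) (π v) := ⟨rfl, v, rfl, huv⟩
      rw [indicator_of_mem hu, liftStep_eq hinj huv, lp.single_apply_self, if_pos ⟨rfl, rfl, huv⟩]
    · rw [if_neg hcond]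
      by_cases hu : u ∈ liftDomain π d R x y
      · have hne : liftStep π d R y u ≠ v := by
          rintro hv
          obtain ⟨hy, huv⟩ := liftStep_spec hu
          exact hcond ⟨hu.1, hv ▸ hy, hv ▸ huv⟩
        rw [indicator_of_mem hu, lp.single_apply_ne _ _ _ hne, map_zero]
      · exact indicator_of_notMem hu _
  simp only [Roe.entry_apply, liftOp, _root_.sum_apply, lp.coeFn_sum,
    Finset.sum_apply, lp.indicatorCompCLM_apply, hpiece]
  split_ifs with huv <;> simp [huv, ite_and]

end LiftOp

theorem exists_isLift {W V X H : Type*} [NormedAddCommGroup H] [InnerProductSpace ℂ H]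
    [Fintype V] (ι : V → X) (π : W → V) {d : W → W → ℝ} {R : ℝ} (T : L2 X H →L[ℂ] L2 X H)
    (hinj : ∀ u, InjOn π {v | d u v ≤ R}) (hinj' : ∀ v, InjOn π {u | d u v ≤ R}) :
    ∃ T', IsLift (fun w => ι (π w)) d T R T' :=
  ⟨liftOp (fun x y => Roe.entry T (ι x) (ι y)) hinj', fun u v =>
    ⟨fun huv => by ext w; simp [entry_liftOp _ hinj, huv],
     fun huv => by ext w; simp [entry_liftOp _ hinj, not_le.mpr huv]⟩⟩

namespace IsLift

variable {X' X H : Type*} [NormedAddCommGroup H] [InnerProductSpace ℂ H] {π : X' → X}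
  {d' : X' → X' → ℝ} {T : L2 X H →L[ℂ] L2 X H} {R : ℝ} {T' : L2 X' H →L[ℂ] L2 X' H}

theorem propagationLE (h : IsLift π d' T R T') : Roe.PropagationLE d' T' R :=
  fun u v huv => (h u v).2 huv

theorem locallyCompact (h : IsLift π d' T R T')
    (hT : ∀ x y, IsCompactOperator (Roe.entry T x y))
    (hfin : ∀ B, Roe.DBounded d' B → B.Finite) : Roe.LocallyCompact d' T' := by
  refine ⟨fun u v => ?_, fun B hB =>
    ((hfin B hB).prod (hfin B hB)).subset fun q hq => ⟨hq.1, hq.2.1⟩⟩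
  rcases le_or_gt (d' u v) R with huv | huv
  · rw [(h u v).1 huv]
    exact hT _ _
  · rw [(h u v).2 huv]
    exact isCompactOperator_zero

theorem apply_eq_zero_of_far {G' : SimpleGraph X'} (hG' : G'.Connected)
    (h : IsLift π (gdist G') T R T') {ξ : L2 X' H} {F : Finset X'} (hξF : ∀ w ∉ F, ξ w = 0)
    {u₀ u : X'} {S : ℝ} (hξ : ∀ w, ξ w ≠ 0 → gdist G' u₀ w ≤ S) (hu : S + R < gdist G' u₀ u) :
    T' ξ u = 0 := by
  rw [Roe.apply_eq_sum_entry T' F hξF]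
  refine Finset.sum_eq_zero fun v _ => ?_
  by_cases hξv : ξ v = 0
  · rw [hξv, map_zero]
  · have := hG'.gdist_triangle u₀ v u
    rw [gdist_comm G' v u] at this
    rw [(h u v).2 (by linarith [hξ v hξv]), zero_apply]

theorem norm_apply_le {G' : SimpleGraph X'} (hG' : G'.Connected) {d : X → X → ℝ}
    (h : IsLift π (gdist G') T R T') (hT : Roe.PropagationLE d T R) {u₀ : X'} {S K : ℝ}
    (hSK : S + |R| < K) (hinj : InjOn π {w | gdist G' u₀ w < K})
    (hiso : ∀ w w', gdist G' u₀ w < K → gdist G' u₀ w' < K → d (π w) (π w') = gdist G' w w')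
    (hfin : {w | gdist G' u₀ w < K}.Finite) {ξ : L2 X' H}
    (hξ : ∀ w, ξ w ≠ 0 → gdist G' u₀ w ≤ S) : ‖T' ξ‖ ≤ ‖T‖ * ‖ξ‖ := by
  classical
  set U := {w | gdist G' u₀ w < K}
  have : Nonempty X' := ⟨u₀⟩
  set F := hfin.toFinset
  have hFU : ∀ w, w ∈ F ↔ w ∈ U := fun w => hfin.mem_toFinset
  have hR := le_abs_self R
  have hmemU : ∀ w, gdist G' u₀ w ≤ S + R → w ∈ U := fun w hw =>
    show _ < K by linarith
  have hξF : ∀ w ∉ F, ξ w = 0 := fun w hw => by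
    by_contra hξw
    exact hw ((hFU w).mpr (show _ < K by linarith [hξ w hξw, abs_nonneg R]))
  obtain ⟨η, hη_norm, hη, hηU⟩ := lp.exists_pushforward_of_injOn (by norm_num) hinj ξ
  have hηF : ∀ x ∉ F.image π, η x = 0 := fun x hx => hηU x (by simpa [F] using hx)
  have hsupp : ∀ u, T' ξ u ≠ 0 → gdist G' u₀ u ≤ S + R := fun u hu => by
    by_contra! hfar
    exact hu (h.apply_eq_zero_of_far hG' hξF hξ hfar)
  have hpull : ∀ u ∈ U, T' ξ u = T η (π u) := by
    intro u hu
    rw [Roe.apply_eq_sum_entry T' F hξF, Roe.apply_eq_sum_entry T (F.image π) hηF,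
      Finset.sum_image (hinj.mono fun w hw => (hFU w).mp hw)]
    refine Finset.sum_congr rfl fun v hv => ?_
    have hvU : v ∈ U := (hFU v).mp hv
    rw [hη v hvU]
    rcases le_or_gt (gdist G' u v) R with huv | huv
    · rw [(h u v).1 huv]
    · rw [(h u v).2 huv, hT _ _ (by rwa [hiso u v hu hvU])]
  calc ‖T' ξ‖ ≤ 1 * ‖T η‖ := by
        refine lp.norm_le_of_injOn (by norm_num) _ _
          (hinj.mono fun u hu => hmemU u (hsupp u hu)) zero_le_one fun u => ?_
        by_cases hu : T' ξ u = 0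
        · simp [hu]
        · rw [one_mul, hpull u (hmemU u (hsupp u hu))]
    _ ≤ ‖T‖ * ‖η‖ := by rw [one_mul]; exact T.le_opNorm η
    _ ≤ ‖T‖ * ‖ξ‖ := by gcongr

end IsLift

theorem lift_norm_bound_general
    (H₀ : Type) [NormedAddCommGroup H₀] [InnerProductSpace ℂ H₀]
    -- a space of graphs X = ⊔ₙ Gₙ
    (V : ℕ → Type) [∀ n, Fintype (V n)] (G : ∀ n, SimpleGraph (V n))
    [MetricSpace (Σ k, V k)]
    (hrestr : ∀ (n : ℕ) (u v : V n), dist (⟨n, u⟩ : Σ k, V k) ⟨n, v⟩ = gdist (G n) u v)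
    -- a Galois covering sequence (G̃ₙ → Gₙ) with deck groups Γₙ
    (W : ℕ → Type) (G' : ∀ n, SimpleGraph (W n)) (hconn' : ∀ n, (G' n).Connected)
    (π : ∀ n, W n → V n)
    -- asymptotic faithfulness
    (hfaith : ∀ R : ℝ, 0 < R → ∃ N : ℕ, ∀ n : ℕ, N ≤ n →
      IsMetricCover (gdist (G' n)) (gdist (G n)) (π n) R)
    -- uniform operator norm localization for the covers, with constant c
    (c : ℝ) (hc0 : 0 < c)
    (honl : ∀ R : ℝ, 0 < R → ∃ S : ℝ, 0 < S ∧
      ∀ (n : ℕ) (A : L2 (W n) H₀ →L[ℂ] L2 (W n) H₀),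
        Roe.LocallyCompact (gdist (G' n)) A → Roe.PropagationLE (gdist (G' n)) A R →
        ∃ ξ : L2 (W n) H₀, ‖ξ‖ = 1 ∧ Roe.SupportDiamLE (gdist (G' n)) ξ S ∧
          c * ‖A‖ ≤ ‖A ξ‖) :
    ∀ (T : L2 (Σ k, V k) H₀ →L[ℂ] L2 (Σ k, V k) H₀) (R : ℝ),
      Roe.LocallyCompact (fun x y : Σ k, V k => dist x y) T →
      Roe.PropagationLE (fun x y : Σ k, V k => dist x y) T R →
      ∃ N : ℕ, ∀ n : ℕ, N ≤ n →
        ∃ T' : L2 (W n) H₀ →L[ℂ] L2 (W n) H₀,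
          IsBlockLift (π n) (gdist (G' n)) T R T' ∧ ‖T'‖ ≤ (1 / c) * ‖T‖ := by
  intro T R hTlc hTprop
  have hR := le_abs_self R
  have hR0 := abs_nonneg R
  obtain ⟨S, hS, hlocalize⟩ := honl (|R| + 1) (by positivity)
  obtain ⟨N, hN⟩ := hfaith (S + |R| + 1) (by positivity)
  refine ⟨N, fun n hn => ?_⟩
  have hcov := hN n hn
  have hRK : R < S + |R| + 1 := by linarith
  have hinj := hcov.injOn_of_le hRK
  obtain ⟨T', hT'⟩ := exists_isLift (Sigma.mk n) (π n) T hinj fun v => by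
    simpa only [gdist_comm _ _ v] using hinj v
  have hT'loc : Roe.LocallyCompact (gdist (G' n)) T' :=
    hT'.locallyCompact hTlc.1 fun B => hcov.finite_of_dBounded (by linarith) (hconn' n)
  obtain ⟨ξ, hξ1, hξS, hcξ⟩ := hlocalize n T' hT'loc (hT'.propagationLE.mono (by linarith))
  obtain ⟨u₀, hu₀⟩ : ∃ u₀, ξ u₀ ≠ 0 := by
    by_contra! hξ0
    simp [show ξ = 0 from lp.ext (funext hξ0)] at hξ1
  have hT'ξ : ‖T' ξ‖ ≤ ‖T‖ * ‖ξ‖ :=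
    hT'.norm_apply_le (hconn' n) hTprop (by linarith)
      (sigma_mk_injective.comp_injOn (hcov.injOn_ball u₀))
      (fun w w' hw hw' => (hrestr n _ _).trans ((hcov.2 u₀).2 w w' hw hw'))
      (hcov.finite_ball u₀) fun w hw => hξS u₀ w hu₀ hw
  refine ⟨T', hT', ?_⟩
  rw [one_div_mul_eq_div, le_div_iff₀ hc0, mul_comm]
  simpa [hξ1] using hcξ.trans hT'ξ

/-- under asymptotic faithfulness and the uniform operator norm localization
property of the covers, lifts of blocks of finite propagation operators are bounded,
with norm at most (1/c)·‖T‖, for all sufficiently large n. -/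
theorem lift_norm_bound
    (H₀ : Type) [NormedAddCommGroup H₀] [InnerProductSpace ℂ H₀] [CompleteSpace H₀]
    [TopologicalSpace.SeparableSpace H₀] (hinf : ¬ FiniteDimensional ℂ H₀)
    -- a space of graphs X = ⊔ₙ Gₙ
    (V : ℕ → Type) [∀ n, Fintype (V n)] (G : ∀ n, SimpleGraph (V n))
    (hconn : ∀ n, (G n).Connected)
    [MetricSpace (Σ k, V k)]
    (hrestr : ∀ (n : ℕ) (u v : V n), dist (⟨n, u⟩ : Σ k, V k) ⟨n, v⟩ = gdist (G n) u v)
    (hsep : ∀ C : ℝ, ∃ N : ℕ, ∀ m n : ℕ, m ≠ n → N ≤ m + n →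
      ∀ (u : V m) (v : V n), C ≤ dist (⟨m, u⟩ : Σ k, V k) ⟨n, v⟩)
    -- a Galois covering sequence (G̃ₙ → Gₙ) with deck groups Γₙ
    (W : ℕ → Type) (G' : ∀ n, SimpleGraph (W n)) (hconn' : ∀ n, (G' n).Connected)
    (Γ : ℕ → Type) [∀ n, Group (Γ n)] [∀ n, MulAction (Γ n) (W n)]
    (hact : ∀ (n : ℕ) (γ : Γ n) (u v : W n), (G' n).Adj (γ • u) (γ • v) ↔ (G' n).Adj u v)
    (hfree : ∀ (n : ℕ) (γ : Γ n) (u : W n), γ • u = u → γ = 1)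
    (π : ∀ n, W n → V n) (hπ : ∀ n, Function.Surjective (π n))
    (hfib : ∀ (n : ℕ) (u v : W n), π n u = π n v ↔ ∃ γ : Γ n, γ • u = v)
    (hquot : ∀ (n : ℕ) (x y : V n),
      (G n).Adj x y ↔ ∃ u v : W n, π n u = x ∧ π n v = y ∧ (G' n).Adj u v)
    -- asymptotic faithfulness
    (hfaith : ∀ R : ℝ, 0 < R → ∃ N : ℕ, ∀ n : ℕ, N ≤ n →
      IsMetricCover (gdist (G' n)) (gdist (G n)) (π n) R)
    -- uniform operator norm localization for the covers, with constant c
    (c : ℝ) (hc0 : 0 < c) (hc1 : c ≤ 1)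
    (honl : ∀ R : ℝ, 0 < R → ∃ S : ℝ, 0 < S ∧
      ∀ (n : ℕ) (A : L2 (W n) H₀ →L[ℂ] L2 (W n) H₀),
        Roe.LocallyCompact (gdist (G' n)) A → Roe.PropagationLE (gdist (G' n)) A R →
        ∃ ξ : L2 (W n) H₀, ‖ξ‖ = 1 ∧ Roe.SupportDiamLE (gdist (G' n)) ξ S ∧
          c * ‖A‖ ≤ ‖A ξ‖) :
    ∀ (T : L2 (Σ k, V k) H₀ →L[ℂ] L2 (Σ k, V k) H₀) (R : ℝ),
      Roe.LocallyCompact (fun x y : Σ k, V k => dist x y) T →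
      Roe.PropagationLE (fun x y : Σ k, V k => dist x y) T R →
      ∃ N : ℕ, ∀ n : ℕ, N ≤ n →
        ∃ T' : L2 (W n) H₀ →L[ℂ] L2 (W n) H₀,
          IsBlockLift (π n) (gdist (G' n)) T R T' ∧ ‖T'‖ ≤ (1 / c) * ‖T‖ :=
  lift_norm_bound_general H₀ V G hrestr W G' hconn' π hfaith c hc0 honl
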